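/- arXiv:2603.08700 — 2 statements merged into one kernel-verified Lean document; each statement's English description precedes it below -/
import Mathlib

section
/- Let V be a linear subspace of ℝⁿ and let S be a nonempty finite set of unit vectors in V such that (1/|S|)·Σ_{x∈S} x xᵀ ⪰ (1/(2·dim V))·P_V in the Loewner order, where P_V is the orthogonal projection onto V. Then for any unit vector w ∈ V, at least a 1/(4n) fraction of the points x ∈ S satisfy |w·x| ≥ 1/(2√n). -/
/-! Testing radial isotropy against `w` gives `∑ x ∈ S, ⟪w, x⟫² ≥ |S| / (2n)`. Every term is at
most `1`, and a term below the threshold `1 / (2√n)` is at most `1 / (4n)`, so at least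
`|S| / (2n) - |S| / (4n)` of the points are above the threshold. -/

open Finset

section

variable {ι : Type*} (s : Finset ι) {f : ι → ℝ} {t : ℝ}

open Classical in
theorem Finset.sum_sq_le_card_filter_add (hf : ∀ x ∈ s, |f x| ≤ 1) :
    ∑ x ∈ s, f x ^ 2 ≤ #{x ∈ s | t ≤ |f x|} + t ^ 2 * #s := by
  rw [← sum_filter_add_sum_filter_not s (fun x => t ≤ |f x|)]
  have large : ∑ x ∈ s with t ≤ |f x|, f x ^ 2 ≤ #{x ∈ s | t ≤ |f x|} := by
    refine (sum_le_sum (g := fun _ => (1 : ℝ)) fun x hx => ?_).trans (by simp)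
    rw [← sq_abs, sq_le_one_iff₀ (abs_nonneg _)]
    exact hf x (mem_filter.1 hx).1
  have small : ∑ x ∈ s with ¬t ≤ |f x|, f x ^ 2 ≤ t ^ 2 * #s := by
    refine (sum_le_sum (g := fun _ => t ^ 2) fun x hx => ?_).trans ?_
    · rw [← sq_abs]
      exact pow_le_pow_left₀ (abs_nonneg _) (not_le.1 (mem_filter.1 hx).2).le 2
    · rw [sum_const, nsmul_eq_mul, mul_comm]
      gcongr
      exact filter_subset _ s
  linarith

end

section

variable {E : Type*} [NormedAddCommGroup E] [InnerProductSpace ℝ E]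

theorem abs_real_inner_le_one_of_norm_eq_one {w x : E} (hw : ‖w‖ = 1) (hx : ‖x‖ = 1) :
    |inner ℝ w x| ≤ 1 := by
  simpa [hw, hx] using abs_real_inner_le_norm w x

theorem card_div_le_sum_inner_sq {V : Submodule ℝ E} [V.HasOrthogonalProjection]
    {S : Finset E} {w : E} (hwV : w ∈ V) (hw : ‖w‖ = 1)
    (hiso : (1 / (2 * (Module.finrank ℝ V : ℝ))) * ‖(V.orthogonalProjectionOnto w : E)‖ ^ 2
      ≤ (1 / (#S : ℝ)) * ∑ x ∈ S, inner ℝ w x ^ 2) :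
    (#S : ℝ) / (2 * Module.finrank ℝ V) ≤ ∑ x ∈ S, inner ℝ w x ^ 2 := by
  rw [← V.starProjection_apply, V.norm_starProjection_apply hwV, hw, one_pow, mul_one] at hiso
  rcases S.eq_empty_or_nonempty with rfl | hS
  · simp
  calc (#S : ℝ) / (2 * Module.finrank ℝ V)
      = #S * (1 / (2 * Module.finrank ℝ V)) := by ring
    _ ≤ #S * ((1 / #S) * ∑ x ∈ S, inner ℝ w x ^ 2) := by gcongr
    _ = ∑ x ∈ S, inner ℝ w x ^ 2 := by
      rw [← mul_assoc, mul_one_div_cancel (by exact_mod_cast hS.card_ne_zero), one_mul]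

end

open Classical in
theorem radial_isotropic_implies_margin_general {n : ℕ}
    (V : Submodule ℝ (EuclideanSpace ℝ (Fin n)))
    (S : Finset (EuclideanSpace ℝ (Fin n)))
    (hunit : ∀ x ∈ S, ‖x‖ = 1)
    (hiso : ∀ w : EuclideanSpace ℝ (Fin n),
      (1 / (2 * (Module.finrank ℝ V : ℝ))) *
          ‖(V.orthogonalProjectionOnto w : EuclideanSpace ℝ (Fin n))‖ ^ 2
        ≤ (1 / (S.card : ℝ)) * ∑ x ∈ S, (inner ℝ w x : ℝ) ^ 2)
    (w : EuclideanSpace ℝ (Fin n)) (hwV : w ∈ V) (hw : ‖w‖ = 1) :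
    (S.card : ℝ) / (4 * n) ≤
      ((S.filter fun x => 1 / (2 * Real.sqrt n) ≤ |(inner ℝ w x : ℝ)|).card : ℝ) := by
  have hd_pos : 0 < Module.finrank ℝ V :=
    Module.finrank_pos_iff_exists_ne_zero.2 ⟨⟨w, hwV⟩, by simp [← norm_ne_zero_iff, hw]⟩
  have hd_le : Module.finrank ℝ V ≤ n := by simpa using V.finrank_le
  have hsecond : (#S : ℝ) / (2 * n) ≤ ∑ x ∈ S, inner ℝ w x ^ 2 :=
    calc (#S : ℝ) / (2 * n) ≤ #S / (2 * Module.finrank ℝ V) := by gcongr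
      _ ≤ _ := card_div_le_sum_inner_sq hwV hw (hiso w)
  have hcount := S.sum_sq_le_card_filter_add (t := 1 / (2 * √n))
    fun x hx => abs_real_inner_le_one_of_norm_eq_one hw (hunit x hx)
  rw [div_pow, one_pow, mul_pow, Real.sq_sqrt n.cast_nonneg] at hcount
  linarith [show (#S : ℝ) / (2 * n) - 1 / (2 ^ 2 * n) * #S = #S / (4 * n) by ring]

open Classical in
theorem radial_isotropic_implies_margin {n : ℕ} (hn : 0 < n)
    (V : Submodule ℝ (EuclideanSpace ℝ (Fin n)))
    (S : Finset (EuclideanSpace ℝ (Fin n))) (hS : S.Nonempty)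
    (hSV : ∀ x ∈ S, x ∈ V) (hunit : ∀ x ∈ S, ‖x‖ = 1)
    (hiso : ∀ w : EuclideanSpace ℝ (Fin n),
      (1 / (2 * (Module.finrank ℝ V : ℝ))) *
          ‖(V.orthogonalProjectionOnto w : EuclideanSpace ℝ (Fin n))‖ ^ 2
        ≤ (1 / (S.card : ℝ)) * ∑ x ∈ S, (inner ℝ w x : ℝ) ^ 2)
    (w : EuclideanSpace ℝ (Fin n)) (hwV : w ∈ V) (hw : ‖w‖ = 1) :
    (S.card : ℝ) / (4 * n) ≤
      ((S.filter fun x => 1 / (2 * Real.sqrt n) ≤ |(inner ℝ w x : ℝ)|).card : ℝ) :=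
  radial_isotropic_implies_margin_general V S hunit hiso w hwV hw
end

section
/- Let α = 10β with β > 0, and let x be a unit vector in ℝⁿ with 0 ≤ x₁ ≤ 1/10, where x₁ denotes the first coordinate. Define t_α(x) := ((β − α·x₁)/√(1 − x₁²))·√n. If β = √(ln n)/n^{1/4} and 1/(2√n) ≤ x₁ ≤ 1/10, then −t_α(x)²/2 + √n·ln(n)/2 ≥ 2.475·ln(n). -/
theorem advantage_exponent_computation :
    ∃ N₀ : ℕ, ∀ n : ℕ, N₀ ≤ n → ∀ x₁ β α : ℝ,
      β = Real.sqrt (Real.log n) / (n : ℝ) ^ ((1 : ℝ) / 4) → α = 10 * β →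
      1 / (2 * Real.sqrt n) ≤ x₁ → x₁ ≤ 1 / 10 →
      2.475 * Real.log n ≤
        -((β - α * x₁) / Real.sqrt (1 - x₁ ^ 2) * Real.sqrt n) ^ 2 / 2
          + Real.sqrt n * Real.log n / 2 := by
  refine ⟨2, fun n hn x₁ β α hβ hα hx₁ hx₂ => ?_⟩
  have hn2 : (2 : ℝ) ≤ (n : ℝ) := by exact_mod_cast hn
  set s := Real.sqrt n with hs_def
  set L := Real.log n with hL_def
  have hs : 0 < s := Real.sqrt_pos.mpr (by linarith)
  have hL : 0 < L := Real.log_pos (by linarith)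
  have hx0 : 0 < x₁ := lt_of_lt_of_le (by positivity) hx₁
  have hq2 : (0 : ℝ) < 1 - x₁ ^ 2 := by nlinarith
  have hqsq : Real.sqrt (1 - x₁ ^ 2) ^ 2 = 1 - x₁ ^ 2 := Real.sq_sqrt hq2.le
  have hssq : s ^ 2 = (n : ℝ) := Real.sq_sqrt (by positivity)
  have h4 : ((n : ℝ) ^ ((1 : ℝ) / 4)) ^ 2 = s := by
    rw [← Real.rpow_natCast ((n : ℝ) ^ ((1 : ℝ) / 4)) 2,
      ← Real.rpow_mul (by positivity), hs_def, Real.sqrt_eq_rpow]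
    norm_num
  have hβ2 : β ^ 2 = L / s := by
    rw [hβ, div_pow, Real.sq_sqrt hL.le, h4]
  have key : ((β - α * x₁) / Real.sqrt (1 - x₁ ^ 2) * s) ^ 2
      = s * L * (1 - 10 * x₁) ^ 2 / (1 - x₁ ^ 2) := by
    rw [hα, mul_pow, div_pow, hqsq, hssq]
    have h1 : (β - 10 * β * x₁) ^ 2 = β ^ 2 * (1 - 10 * x₁) ^ 2 := by ring
    rw [h1, hβ2, ← hssq]
    field_simp
  rw [key]
  have hsx : 1 / 2 ≤ s * x₁ := by
    rw [div_le_iff₀ (by positivity : (0:ℝ) < 2 * s)] at hx₁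
    nlinarith
  have hfrac : s * L * (1 - 10 * x₁) ^ 2 / (1 - x₁ ^ 2) ≤ s * L - 4.95 * L := by
    rw [div_le_iff₀ hq2]
    nlinarith [mul_le_mul_of_nonneg_left hsx hL.le,
      mul_nonneg (mul_nonneg hL.le hs.le) (mul_nonneg hx0.le (sub_nonneg.mpr hx₂)),
      mul_nonneg hL.le (sq_nonneg x₁),
      mul_nonneg (mul_nonneg hL.le hs.le) (sq_nonneg x₁)]
  linarith
end
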